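/- arXiv:2010.12883 — 2 statements merged into one kernel-verified Lean document; each statement's English description precedes it below -/
import Mathlib

section
/- The EUBO is an upper bound on the conditional log-evidence: with U defined as ∫ q_u(θ|D_r) log p(D_e|θ) dθ + KL[q_u(θ|D_r) ‖ p(θ|D)], one has U ≥ log p(D_e|D_r), with equality if and only if q_u(θ|D_r) = p(θ|D_r) almost everywhere. -/
open MeasureTheory Real

/-- The EUBO upper-bounds log p(D_e|D_r), with equality iff q_u = p(·|D_r) a.e. -/
theorem eubo_upper_bound
    {Θ : Type*} [MeasurableSpace Θ] (μ : Measure Θ)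
    (pr le lr postD postR qu : Θ → ℝ) (ZD Zr pDeDr : ℝ)
    (hpr0 : ∀ θ, 0 ≤ pr θ) (hle : ∀ θ, 0 < le θ) (hlr : ∀ θ, 0 < lr θ)
    (hZD : ZD = ∫ θ, le θ * lr θ * pr θ ∂μ)
    (hZr : Zr = ∫ θ, lr θ * pr θ ∂μ)
    (hZDpos : 0 < ZD) (hZrpos : 0 < Zr)
    (hpostD : ∀ θ, postD θ = le θ * lr θ * pr θ / ZD)
    (hpostR : ∀ θ, postR θ = lr θ * pr θ / Zr)
    (hqu0 : ∀ θ, 0 ≤ qu θ) (hqu1 : ∫ θ, qu θ ∂μ = 1)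
    (hac : ∀ θ, postD θ = 0 → qu θ = 0)
    (hDeDr : pDeDr = ∫ θ, le θ * postR θ ∂μ) (hDeDrpos : 0 < pDeDr)
    (hint1 : Integrable (fun θ => qu θ * Real.log (le θ)) μ)
    (hint2 : Integrable (fun θ => qu θ * Real.log (qu θ / postD θ)) μ)
    (hint3 : Integrable (fun θ => qu θ * Real.log (qu θ / postR θ)) μ) :
    Real.log pDeDr ≤
        (∫ θ, qu θ * Real.log (le θ) ∂μ) +
          (∫ θ, qu θ * Real.log (qu θ / postD θ) ∂μ) ∧
      (((∫ θ, qu θ * Real.log (le θ) ∂μ) +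
          (∫ θ, qu θ * Real.log (qu θ / postD θ) ∂μ) = Real.log pDeDr) ↔
        qu =ᵐ[μ] postR) := by
  have hZrne : Zr ≠ 0 := ne_of_gt hZrpos
  have hZDne : ZD ≠ 0 := ne_of_gt hZDpos
  have hpostR_nonneg : ∀ θ, 0 ≤ postR θ := by
    intro θ; rw [hpostR]
    have := (hlr θ).le; have := hpr0 θ
    positivity
  -- qu is integrable since its integral is 1
  have hqu_int : Integrable qu μ := by
    by_contra h
    rw [integral_undef h] at hqu1; norm_num at hqu1
  -- lr * pr is integrable since its integral is Zr > 0
  have hlrpr_int : Integrable (fun θ => lr θ * pr θ) μ := by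
    by_contra h
    rw [integral_undef h] at hZr
    rw [hZr] at hZrpos; exact lt_irrefl 0 hZrpos
  have hpostR_eq : postR = fun θ => (lr θ * pr θ) / Zr := funext hpostR
  have hpostR_int : Integrable postR μ := by
    rw [hpostR_eq]; exact hlrpr_int.div_const Zr
  have hpostR1 : ∫ θ, postR θ ∂μ = 1 := by
    rw [hpostR_eq, integral_div, ← hZr, div_self hZrne]
  -- p(D_e|D_r) = ZD / Zr
  have hpD : pDeDr = ZD / Zr := by
    rw [hDeDr]
    have heq : (fun θ => le θ * postR θ) = fun θ => (le θ * lr θ * pr θ) / Zr := by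
      funext θ; rw [hpostR]; ring
    rw [heq, integral_div, ← hZD]
  -- where qu > 0, postR > 0 and pr > 0
  have hqu_pos_pr : ∀ θ, 0 < qu θ → 0 < pr θ := by
    intro θ hq
    rcases eq_or_lt_of_le (hpr0 θ) with h0 | h0
    · exfalso
      have hD0 : postD θ = 0 := by rw [hpostD, ← h0]; ring
      have := hac θ hD0
      rw [this] at hq; exact lt_irrefl 0 hq
    · exact h0
  have hqu_pos_postR : ∀ θ, 0 < qu θ → 0 < postR θ := by
    intro θ hq
    have hpr := hqu_pos_pr θ hq
    rw [hpostR]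
    exact div_pos (mul_pos (hlr θ) hpr) hZrpos
  -- pointwise Gibbs inequality
  have hpw : ∀ θ, qu θ - postR θ ≤ qu θ * Real.log (qu θ / postR θ) := by
    intro θ
    rcases eq_or_lt_of_le (hqu0 θ) with h | h
    · rw [← h]; simp; linarith [hpostR_nonneg θ]
    · have hp := hqu_pos_postR θ h
      have hx : 0 < postR θ / qu θ := div_pos hp h
      have hlog := Real.log_le_sub_one_of_pos hx
      have h2 : qu θ * Real.log (postR θ / qu θ) ≤ qu θ * (postR θ / qu θ - 1) :=
        mul_le_mul_of_nonneg_left hlog h.le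
      have h3 : qu θ * (postR θ / qu θ - 1) = postR θ - qu θ := by
        field_simp
      have h4 : Real.log (qu θ / postR θ) = - Real.log (postR θ / qu θ) := by
        rw [← Real.log_inv]
        congr 1
        rw [inv_div]
      rw [h4, mul_neg]
      linarith
  -- equality case pointwise
  have hpw_eq : ∀ θ, qu θ * Real.log (qu θ / postR θ) - (qu θ - postR θ) = 0 →
      qu θ = postR θ := by
    intro θ heq
    rcases eq_or_lt_of_le (hqu0 θ) with h | h
    · rw [← h] at heq ⊢
      simp at heq
      linarith
    · have hp := hqu_pos_postR θ h
      by_contra hne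
      have hx1 : postR θ / qu θ ≠ 1 := by
        intro h1
        apply hne
        field_simp at h1
        linarith
      have hlog := Real.log_lt_sub_one_of_pos (div_pos hp h) hx1
      have h2 : qu θ * Real.log (postR θ / qu θ) < qu θ * (postR θ / qu θ - 1) :=
        (mul_lt_mul_iff_right₀ h).mpr hlog
      have h3 : qu θ * (postR θ / qu θ - 1) = postR θ - qu θ := by field_simp
      have h4 : Real.log (qu θ / postR θ) = - Real.log (postR θ / qu θ) := by
        rw [← Real.log_inv]; congr 1; rw [inv_div]
      rw [h4, mul_neg] at heq
      linarith
  -- integral facts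
  have hsub_int : Integrable (fun θ => qu θ - postR θ) μ := hqu_int.sub hpostR_int
  have hsub0 : ∫ θ, (qu θ - postR θ) ∂μ = 0 := by
    rw [integral_sub hqu_int hpostR_int, hqu1, hpostR1]; ring
  have hKL_nonneg : 0 ≤ ∫ θ, qu θ * Real.log (qu θ / postR θ) ∂μ := by
    rw [← hsub0]
    exact integral_mono hsub_int hint3 hpw
  -- pointwise decomposition
  have hptw_dec : ∀ θ, qu θ * Real.log (qu θ / postD θ) =
      qu θ * Real.log (qu θ / postR θ) - qu θ * Real.log (le θ) + qu θ * Real.log pDeDr := by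
    intro θ
    rcases eq_or_lt_of_le (hqu0 θ) with h | h
    · rw [← h]; ring
    · have hp := hqu_pos_postR θ h
      have hprpos := hqu_pos_pr θ h
      have hrel : postD θ = le θ * postR θ / pDeDr := by
        rw [hpostD, hpostR, hpD]
        field_simp
      have e1 : qu θ / postD θ = (qu θ / postR θ) * pDeDr / le θ := by
        rw [hrel]
        field_simp
      have hqpos : 0 < qu θ / postR θ := div_pos h hp
      rw [e1, Real.log_div (by positivity) (ne_of_gt (hle θ)),
        Real.log_mul (ne_of_gt hqpos) (ne_of_gt hDeDrpos)]
      ring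
  -- integral decomposition
  have hint_dec : ∫ θ, qu θ * Real.log (qu θ / postD θ) ∂μ
      = (∫ θ, qu θ * Real.log (qu θ / postR θ) ∂μ)
        - (∫ θ, qu θ * Real.log (le θ) ∂μ) + Real.log pDeDr := by
    rw [integral_congr_ae (Filter.Eventually.of_forall hptw_dec)]
    have e2 : ∫ θ, (qu θ * Real.log (qu θ / postR θ) - qu θ * Real.log (le θ)
          + qu θ * Real.log pDeDr) ∂μ
        = (∫ θ, (qu θ * Real.log (qu θ / postR θ) - qu θ * Real.log (le θ)) ∂μ)
          + ∫ θ, qu θ * Real.log pDeDr ∂μ :=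
      integral_add (hint3.sub hint1) (hqu_int.mul_const _)
    rw [e2, integral_sub hint3 hint1, integral_mul_const, hqu1, one_mul]
  constructor
  · rw [hint_dec]
    linarith
  · rw [hint_dec]
    constructor
    · intro heq
      have hK0 : ∫ θ, qu θ * Real.log (qu θ / postR θ) ∂μ = 0 := by linarith
      have hg_int : Integrable
          (fun θ => qu θ * Real.log (qu θ / postR θ) - (qu θ - postR θ)) μ :=
        hint3.sub hsub_int
      have hg0 : ∫ θ, (qu θ * Real.log (qu θ / postR θ) - (qu θ - postR θ)) ∂μ = 0 := by
        rw [integral_sub hint3 hsub_int, hK0, hsub0]; ring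
      have hg_nonneg : 0 ≤ᵐ[μ] fun θ =>
          qu θ * Real.log (qu θ / postR θ) - (qu θ - postR θ) := by
        refine Filter.Eventually.of_forall fun θ => ?_
        simp only [Pi.zero_apply]
        linarith [hpw θ]
      have := (integral_eq_zero_iff_of_nonneg_ae hg_nonneg hg_int).mp hg0
      filter_upwards [this] with θ hθ
      exact hpw_eq θ hθ
    · intro h
      have hK0 : ∫ θ, qu θ * Real.log (qu θ / postR θ) ∂μ = 0 := by
        have : (fun θ => qu θ * Real.log (qu θ / postR θ)) =ᵐ[μ] (fun _ => (0 : ℝ)) := by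
          filter_upwards [h] with θ hθ
          rcases eq_or_ne (postR θ) 0 with h0 | h0
          · simp [hθ, h0]
          · simp [hθ, div_self h0]
        rw [integral_congr_ae this, integral_zero]
      linarith
end

section
/- Minimizing the EUBO is equivalent to VI retraining: for any probability density q over θ, the EUBO U(q) = ∫ q(θ) log p(D_e|θ) dθ + KL[q ‖ p(·|D)] and the ELBO with respect to remaining data L(q) = ∫ q(θ) log p(D_r|θ) dθ − KL[q ‖ p(θ)] satisfy U(q) + L(q) = log p(D), a constant independent of q. Hence argmin_q U(q) = argmax_q L(q). -/
open MeasureTheory Real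

/-- For any density q, EUBO(q) + ELBO(q) = log p(D): minimizing EUBO = maximizing ELBO. -/
theorem eubo_plus_elbo_const
    {Θ : Type*} [MeasurableSpace Θ] (μ : Measure Θ)
    (pr le lr postD : Θ → ℝ) (ZD : ℝ)
    (hpr0 : ∀ θ, 0 ≤ pr θ) (hle : ∀ θ, 0 < le θ) (hlr : ∀ θ, 0 < lr θ)
    (hZD : ZD = ∫ θ, le θ * lr θ * pr θ ∂μ) (hZDpos : 0 < ZD)
    (hpostD : ∀ θ, postD θ = le θ * lr θ * pr θ / ZD) :
    ∀ q : Θ → ℝ, (∀ θ, 0 ≤ q θ) → (∫ θ, q θ ∂μ = 1) →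
      (∀ θ, postD θ = 0 → q θ = 0) →
      Integrable (fun θ => q θ * Real.log (le θ)) μ →
      Integrable (fun θ => q θ * Real.log (lr θ)) μ →
      Integrable (fun θ => q θ * Real.log (q θ / postD θ)) μ →
      Integrable (fun θ => q θ * Real.log (q θ / pr θ)) μ →
      ((∫ θ, q θ * Real.log (le θ) ∂μ) +
          (∫ θ, q θ * Real.log (q θ / postD θ) ∂μ)) +
        ((∫ θ, q θ * Real.log (lr θ) ∂μ) -
          (∫ θ, q θ * Real.log (q θ / pr θ) ∂μ))
      = Real.log ZD := by
  intro q hq0 hq1 hqabs hIle hIlr hIpost hIpr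
  have key : ∀ θ, q θ * Real.log (le θ) + q θ * Real.log (q θ / postD θ)
      + q θ * Real.log (lr θ) - q θ * Real.log (q θ / pr θ)
      = q θ * Real.log ZD := by
    intro θ
    rcases eq_or_lt_of_le (hq0 θ) with h | h
    · simp [← h]
    · have hpost : postD θ ≠ 0 := fun h0 => by
        have := hqabs θ h0; linarith
      have hprpos : pr θ ≠ 0 := by
        intro h0
        exact hpost (by rw [hpostD θ, h0]; ring)
      have hprpos : 0 < pr θ := lt_of_le_of_ne (hpr0 θ) (Ne.symm hprpos)
      have hqne : q θ ≠ 0 := ne_of_gt h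
      rw [Real.log_div hqne hpost, Real.log_div hqne hprpos.ne', hpostD θ,
        Real.log_div (mul_pos (mul_pos (hle θ) (hlr θ)) hprpos).ne' hZDpos.ne',
        Real.log_mul (mul_pos (hle θ) (hlr θ)).ne' hprpos.ne',
        Real.log_mul (hle θ).ne' (hlr θ).ne']
      ring
  have h1 : ((∫ θ, q θ * Real.log (le θ) ∂μ) +
          (∫ θ, q θ * Real.log (q θ / postD θ) ∂μ)) +
        ((∫ θ, q θ * Real.log (lr θ) ∂μ) -
          (∫ θ, q θ * Real.log (q θ / pr θ) ∂μ))
      = ∫ θ, (q θ * Real.log (le θ) + q θ * Real.log (q θ / postD θ)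
          + q θ * Real.log (lr θ) - q θ * Real.log (q θ / pr θ)) ∂μ := by
    have hI2 : Integrable (fun θ => q θ * Real.log (le θ)
        + q θ * Real.log (q θ / postD θ)) μ := hIle.add hIpost
    have hI3 : Integrable (fun θ => q θ * Real.log (le θ)
        + q θ * Real.log (q θ / postD θ) + q θ * Real.log (lr θ)) μ := hI2.add hIlr
    rw [integral_sub hI3 hIpr, integral_add hI2 hIlr, integral_add hIle hIpost]
    ring
  rw [h1]
  simp_rw [key]
  rw [integral_mul_const, hq1, one_mul]
end
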